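/- arXiv:1302.1626 — 5 statements merged into one kernel-verified Lean document; each statement's English description precedes it below -/
import Mathlib

section
/- Let G be a group of permutations of a finite set Ω, and let C ⊆ GF(2)^Ω be a self-orthogonal code invariant under G (i.e., σ·C = C for all σ ∈ G, where σ permutes coordinates). Define C(G,Ω) = ⟨Fix(σ) : σ an involution of G⟩⊥, where Fix(σ) ⊆ Ω is viewed as its indicator vector. Then C ⊆ C(G,Ω). -/
/-- The dual code of `C` w.r.t. the inner product `(x,y) = ∑ i, x i * y i` over `GF(2)`. -/
def dualCode {Ω : Type*} [Fintype Ω] (C : Submodule (ZMod 2) (Ω → ZMod 2)) :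
    Submodule (ZMod 2) (Ω → ZMod 2) where
  carrier := {y | ∀ x ∈ C, ∑ i, x i * y i = 0}
  zero_mem' := by intro x hx; simp
  add_mem' := by
    intro a b ha hb x hx
    simp [mul_add, Finset.sum_add_distrib, ha x hx, hb x hx]
  smul_mem' := by
    intro c y hy x hx
    simp only [Pi.smul_apply, smul_eq_mul, mul_left_comm, ← Finset.mul_sum]
    rw [hy x hx, mul_zero]

/-- The indicator vector in `GF(2)^Ω` of the fixed-point set of a permutation. -/
def fixInd {Ω : Type*} [DecidableEq Ω] (σ : Equiv.Perm Ω) : Ω → ZMod 2 :=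
  fun i => if σ i = i then 1 else 0

/-!
Over `GF(2)` the points moved by an involution `σ` come in pairs `{i, σ i}` contributing
`2 x_i x_{σ i} = 0` to `∑ x_i x_{σ i}`, while a fixed point contributes `x_i² = x_i`. Hence
`⟨Fix σ, x⟩ = ⟨x, σ x⟩`, which vanishes for `x ∈ C` since `σ x ∈ C` and `C` is
self-orthogonal.
-/

open Finset

theorem Function.Involutive.sum_eq_sum_filter_fixed {α R : Type*} [Fintype α] [DecidableEq α]
    [Semiring R] [CharP R 2] {σ : α → α} (hσ : Function.Involutive σ) {f : α → R}
    (hf : ∀ i, f (σ i) = f i) :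
    ∑ i, f i = ∑ i with σ i = i, f i := by
  have hmoved : ∑ i with σ i ≠ i, f i = 0 :=
    sum_involution (fun i _ => σ i) (fun i _ => by rw [hf, CharTwo.add_self_eq_zero])
      (fun i hi _ => (mem_filter.1 hi).2) (fun i hi => by simpa [hσ i, eq_comm] using hi)
      (fun i _ => hσ i)
  rw [← sum_filter_add_sum_filter_not univ (fun i => σ i = i), hmoved, add_zero]

theorem sum_fixInd_mul {Ω : Type*} [Fintype Ω] [DecidableEq Ω] {σ : Equiv.Perm Ω}
    (hσ : Function.Involutive σ) (x : Ω → ZMod 2) :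
    ∑ i, fixInd σ i * x i = ∑ i, x i * x (σ i) := by
  rw [hσ.sum_eq_sum_filter_fixed (f := fun i => x i * x (σ i)) fun i => by rw [hσ i, mul_comm],
    sum_filter]
  refine sum_congr rfl fun i _ => ?_
  by_cases h : σ i = i
  · rw [fixInd, if_pos h, if_pos h, one_mul, h, ← sq, ZMod.pow_card]
  · rw [fixInd, if_neg h, if_neg h, zero_mul]

theorem mem_dualCode_span_iff {Ω : Type*} [Fintype Ω] {S : Set (Ω → ZMod 2)}
    {y : Ω → ZMod 2} :
    y ∈ dualCode (Submodule.span (ZMod 2) S) ↔ ∀ v ∈ S, ∑ i, v i * y i = 0 := by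
  refine ⟨fun h v hv => h v (Submodule.subset_span hv), fun h x hx => ?_⟩
  have hspan : Submodule.span (ZMod 2) S ≤
      LinearMap.ker ((dotProductBilin (ZMod 2) (ZMod 2)).flip y) :=
    Submodule.span_le.2 h
  exact hspan hx

/-- Chigira–Harada–Kitazume: a `G`-invariant self-orthogonal code is contained in
`C(G,Ω) = ⟨Fix(σ) : σ an involution of G⟩⊥`. -/
theorem selfOrthogonal_le_CGOmega {Ω : Type*} [Fintype Ω] [DecidableEq Ω]
    (G : Subgroup (Equiv.Perm Ω)) (C : Submodule (ZMod 2) (Ω → ZMod 2))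
    (hso : C ≤ dualCode C)
    (hinv : ∀ σ ∈ G, ∀ x ∈ C, (fun i => x (σ⁻¹ i)) ∈ C) :
    C ≤ dualCode (Submodule.span (ZMod 2)
      {v | ∃ σ ∈ G, σ ^ 2 = 1 ∧ σ ≠ 1 ∧ v = fixInd σ}) := by
  intro x hx
  rw [mem_dualCode_span_iff]
  rintro _ ⟨σ, hσG, hσ2, -, rfl⟩
  have hσ : Function.Involutive σ := fun i => by
    rw [← Equiv.Perm.mul_apply, ← sq, hσ2, Equiv.Perm.one_apply]
  have hσinv : σ⁻¹ = σ := inv_eq_of_mul_eq_one_right (by rw [← sq, hσ2])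
  have hσx_orth : ∑ i, x i * x (σ⁻¹ i) = 0 := hso (hinv σ hσG x hx) x hx
  rwa [sum_fixInd_mul hσ, ← hσinv]
end

section
/- Let σ be a permutation of order 2 of a finite set Ω, and let C ⊆ GF(2)^Ω be a self-orthogonal code invariant under σ. Then every codeword of C is orthogonal to the indicator vector of Fix(σ) = {x ∈ Ω : σ(x) = x}. -/
/-!
For `c ∈ C` the translate `σ c` lies in `C`, so self-orthogonality gives `∑ i, c i c (σ i) = 0`.
In characteristic 2 the terms of this sum at the two points of a `σ`-orbit of size 2 cancel,
leaving `∑_{σ i = i} c i ^ 2`, and `c i ^ 2 = c i` in `GF(2)`.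
-/

open Finset

section

variable {Ω R : Type*} [Fintype Ω] [DecidableEq Ω]

theorem sum_mul_apply_involutive_eq_sum_fixed [CommSemiring R] [CharP R 2] {σ : Ω → Ω}
    (hσ : Function.Involutive σ) (x : Ω → R) :
    ∑ i, x i * x (σ i) = ∑ i with σ i = i, x i * x i := by
  rw [← sum_filter_add_sum_filter_not univ (fun i => σ i = i)]
  have hmoved : ∑ i with ¬σ i = i, x i * x (σ i) = 0 := by
    refine sum_involution (fun i _ => σ i) (fun i _ => ?_) (fun i hi _ => (mem_filter.mp hi).2)
      (fun i hi => ?_) (fun i _ => hσ i)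
    · rw [hσ i, mul_comm, CharTwo.add_self_eq_zero]
    · simpa [hσ i, eq_comm] using hi
  rw [hmoved, add_zero]
  exact sum_congr rfl fun i hi => by rw [(mem_filter.mp hi).2]

theorem sum_mul_fixInd (σ : Equiv.Perm Ω) (c : Ω → ZMod 2) :
    ∑ i, c i * fixInd σ i = ∑ i with σ i = i, c i := by
  simp only [fixInd, mul_ite, mul_one, mul_zero, sum_ite, sum_const_zero, add_zero]

end

theorem codeword_orthogonal_fix_general {Ω : Type*} [Fintype Ω] [DecidableEq Ω]
    (σ : Equiv.Perm Ω) (h2 : σ ^ 2 = 1)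
    (C : Submodule (ZMod 2) (Ω → ZMod 2)) (hso : C ≤ dualCode C)
    (hinv : ∀ x ∈ C, (fun i => x (σ⁻¹ i)) ∈ C) :
    ∀ c ∈ C, ∑ i, c i * fixInd σ i = 0 := by
  intro c hc
  have hσ : Function.Involutive σ := fun i => by
    simpa [sq] using congr($h2 i)
  calc ∑ i, c i * fixInd σ i = ∑ i with σ i = i, c i * c i := by
        simp only [sum_mul_fixInd, ← sq, ZMod.pow_card]
    _ = ∑ i, c i * c (σ i) := (sum_mul_apply_involutive_eq_sum_fixed hσ c).symm
    _ = ∑ i, c (σ⁻¹ i) * c i := by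
        rw [← Equiv.sum_comp σ (fun i => c (σ⁻¹ i) * c i)]
        simp
    _ = 0 := hso hc _ (hinv c hc)

/-- Every codeword of a self-orthogonal code invariant under an involution `σ` is orthogonal to
the indicator vector of `Fix(σ)`. -/
theorem codeword_orthogonal_fix {Ω : Type*} [Fintype Ω] [DecidableEq Ω]
    (σ : Equiv.Perm Ω) (h2 : σ ^ 2 = 1) (h1 : σ ≠ 1)
    (C : Submodule (ZMod 2) (Ω → ZMod 2)) (hso : C ≤ dualCode C)
    (hinv : ∀ x ∈ C, (fun i => x (σ⁻¹ i)) ∈ C) :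
    ∀ c ∈ C, ∑ i, c i * fixInd σ i = 0 :=
  codeword_orthogonal_fix_general σ h2 C hso hinv
end

section
/- Let r, s be positive integers, T = GF(2^r)^{2s} viewed as a finite set, and G = T ⋊ SL(2s, GF(2^r)) acting on T with T acting by translations and SL(2s, GF(2^r)) acting linearly. Then there is no self-dual binary code of length 2^{2rs} (a subspace C ⊆ GF(2)^T with C = C⊥) invariant under G. -/
open Finset Function

section Code

variable {Ω : Type*} [Fintype Ω] [DecidableEq Ω] {f g : Ω → Ω}

lemma sum_mul_comp_of_involutive (hf : Involutive f) (x : Ω → ZMod 2) :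
    ∑ ω, x ω * x (f ω) = ∑ ω, x ω * if f ω = ω then 1 else 0 := by
  rw [← sum_filter_add_sum_filter_not univ (fun ω => f ω = ω)]
  have h_moved : ∑ ω ∈ univ.filter (fun ω => f ω ≠ ω), x ω * x (f ω) = 0 :=
    sum_involution (fun ω _ => f ω)
      (fun ω _ => by rw [hf ω, mul_comm, CharTwo.add_self_eq_zero])
      (fun ω hω _ => (mem_filter.mp hω).2)
      (fun ω hω => by simpa [hf ω, eq_comm] using hω)
      (fun ω _ => hf ω)
  simp only [h_moved, add_zero, mul_boole]
  rw [← sum_filter]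
  refine sum_congr rfl fun ω hω => ?_
  rw [(mem_filter.mp hω).2, ← sq, ZMod.pow_card]

lemma boole_fixed_mem_of_dualCode_eq {C : Submodule (ZMod 2) (Ω → ZMod 2)}
    (hC : dualCode C = C) (hf : Involutive f) (hCf : ∀ x ∈ C, x ∘ f ∈ C) :
    (fun ω => if f ω = ω then 1 else 0) ∈ C := by
  rw [← hC]
  intro x hx
  rw [← sum_mul_comp_of_involutive hf]
  exact (hC.symm ▸ hCf x hx : x ∘ f ∈ dualCode C) x hx

theorem dualCode_ne_self_of_involutive (C : Submodule (ZMod 2) (Ω → ZMod 2))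
    (hf : Involutive f) (hg : Involutive g) (hCf : ∀ x ∈ C, x ∘ f ∈ C)
    (hCg : ∀ x ∈ C, x ∘ g ∈ C) (hodd : Odd #{ω | f ω = ω ∧ g ω = ω}) :
    dualCode C ≠ C := by
  intro hC
  have hfC := boole_fixed_mem_of_dualCode_eq hC hf hCf
  have hgC := boole_fixed_mem_of_dualCode_eq hC hg hCg
  have h : ∑ ω, (if g ω = ω then (1 : ZMod 2) else 0) * (if f ω = ω then 1 else 0) = 0 :=
    (hC.symm ▸ hfC : _ ∈ dualCode C) _ hgC
  simp only [boole_mul, ← ite_and, sum_boole, and_comm] at h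
  rw [(ZMod.natCast_eq_one_iff_odd).mpr hodd] at h
  exact one_ne_zero h

end Code

section CharTwo

variable {K : Type*} [CommRing K] [CharP K 2]

lemma LinearMap.det_eq_one_of_involutive [NoZeroDivisors K] {M : Type*} [AddCommGroup M]
    [Module K M] {f : M →ₗ[K] M} (hf : Involutive f) : LinearMap.det f = 1 := by
  have hff : f ∘ₗ f = LinearMap.id := LinearMap.ext hf
  rw [← CharTwo.sq_inj, sq, ← LinearMap.det_comp, hff, LinearMap.det_id, one_pow]

lemma exists_specialLinearGroup_mulVec_eq [NoZeroDivisors K] {n : Type*} [Fintype n]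
    [DecidableEq n] {f : (n → K) →ₗ[K] n → K} (hf : Involutive f) :
    ∃ A : Matrix.SpecialLinearGroup n K, ∀ v, (A : Matrix n n K).mulVec v = f v :=
  ⟨⟨LinearMap.toMatrix' f,
      by rw [LinearMap.det_toMatrix', LinearMap.det_eq_one_of_involutive hf]⟩,
    LinearMap.toMatrix'_mulVec f⟩

end CharTwo

section Shear

variable {K W : Type*} [CommRing K] [AddCommGroup W] [Module K W]

variable (K W) in
def shearFst : W × W →ₗ[K] W × W :=
  (LinearMap.fst K W W + LinearMap.snd K W W).prod (LinearMap.snd K W W)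

variable (K W) in
def shearSnd : W × W →ₗ[K] W × W :=
  (LinearMap.fst K W W).prod (LinearMap.fst K W W + LinearMap.snd K W W)

@[simp]
lemma shearFst_apply (w : W × W) : shearFst K W w = (w.1 + w.2, w.2) := rfl

@[simp]
lemma shearSnd_apply (w : W × W) : shearSnd K W w = (w.1, w.1 + w.2) := rfl

lemma shearFst_eq_self_and_shearSnd_eq_self_iff (w : W × W) :
    shearFst K W w = w ∧ shearSnd K W w = w ↔ w = 0 := by
  simp [Prod.ext_iff, and_comm]

variable [CharP K 2]

lemma involutive_shearFst : Involutive (shearFst K W) := fun w => by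
  simp [add_assoc, ← two_smul K, CharTwo.two_eq_zero]

lemma involutive_shearSnd : Involutive (shearSnd K W) := fun w => by
  simp [← add_assoc, ← two_smul K, CharTwo.two_eq_zero]

end Shear

theorem exists_involutive_pair_fixed_inter_eq_zero {K V : Type*} [Field K] [CharP K 2]
    [AddCommGroup V] [Module K V] [FiniteDimensional K V] (hV : Even (Module.finrank K V)) :
    ∃ σ τ : V →ₗ[K] V, Involutive σ ∧ Involutive τ ∧ ∀ v, σ v = v ∧ τ v = v ↔ v = 0 := by
  obtain ⟨m, hm⟩ := hV
  let e : V ≃ₗ[K] (Fin m → K) × (Fin m → K) := LinearEquiv.ofFinrankEq _ _ (by simp [hm])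
  refine ⟨e.symm.conj (shearFst K _), e.symm.conj (shearSnd K _), fun v => ?_, fun v => ?_,
    fun v => ?_⟩
  · simp only [LinearEquiv.conj_apply_apply, LinearEquiv.symm_symm, LinearEquiv.apply_symm_apply,
      involutive_shearFst _, LinearEquiv.symm_apply_apply]
  · simp only [LinearEquiv.conj_apply_apply, LinearEquiv.symm_symm, LinearEquiv.apply_symm_apply,
      involutive_shearSnd _, LinearEquiv.symm_apply_apply]
  · simp only [LinearEquiv.conj_apply_apply, LinearEquiv.symm_symm, LinearEquiv.symm_apply_eq,
      shearFst_eq_self_and_shearSnd_eq_self_iff, LinearEquiv.map_eq_zero_iff]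

theorem no_selfdual_affine_invariant_general (r s : ℕ)
    {F : Type*} [Field F] [Fintype F] (hF : Fintype.card F = 2 ^ r)
    (C : Submodule (ZMod 2) ((Fin (2 * s) → F) → ZMod 2))
    (hSL : ∀ A : Matrix.SpecialLinearGroup (Fin (2 * s)) F, ∀ x ∈ C,
      (fun v => x ((A : Matrix (Fin (2*s)) (Fin (2*s)) F).mulVec v)) ∈ C) :
    dualCode C ≠ C := by
  classical
  have : CharP F 2 := charP_of_card_eq_prime_pow hF
  have hinv : ∀ f : (Fin (2 * s) → F) →ₗ[F] Fin (2 * s) → F, Involutive f →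
      ∀ x ∈ C, x ∘ f ∈ C := by
    intro f hf x hx
    obtain ⟨A, hA⟩ := exists_specialLinearGroup_mulVec_eq hf
    have hxA := hSL A x hx
    simp only [hA] at hxA
    exact hxA
  obtain ⟨σ, τ, hσ, hτ, hfix⟩ :=
    exists_involutive_pair_fixed_inter_eq_zero (K := F) (V := Fin (2 * s) → F)
      ⟨s, by simp [two_mul]⟩
  refine dualCode_ne_self_of_involutive C hσ hτ (hinv σ hσ) (hinv τ hτ) ?_
  simp [hfix, filter_eq']

/-- There is no self-dual binary code of length `2^(2rs)` (on the coordinate set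
`T = GF(2^r)^(2s)`) invariant under the affine group `T ⋊ SL(2s, GF(2^r))`. -/
theorem no_selfdual_affine_invariant (r s : ℕ) (hr : 0 < r) (hs : 0 < s)
    {F : Type*} [Field F] [Fintype F] (hF : Fintype.card F = 2 ^ r)
    (C : Submodule (ZMod 2) ((Fin (2 * s) → F) → ZMod 2))
    (hT : ∀ t : Fin (2 * s) → F, ∀ x ∈ C, (fun v => x (v + t)) ∈ C)
    (hSL : ∀ A : Matrix.SpecialLinearGroup (Fin (2 * s)) F, ∀ x ∈ C,
      (fun v => x ((A : Matrix (Fin (2*s)) (Fin (2*s)) F).mulVec v)) ∈ C) :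
    dualCode C ≠ C :=
  no_selfdual_affine_invariant_general r s hF C hSL
end

section
/- Let G be a permutation group on a finite set Ω and suppose there exist involutions σ, τ ∈ G with |Fix(σ) ∩ Fix(τ)| odd. Then the code C(G,Ω)⊥ = ⟨Fix(ρ) : ρ an involution of G⟩ ⊆ GF(2)^Ω is not self-orthogonal, and hence no self-dual code of length |Ω| invariant under G exists. -/
section

variable {Ω : Type*} [Fintype Ω]

lemma mem_dualCode {C : Submodule (ZMod 2) (Ω → ZMod 2)} {y : Ω → ZMod 2} :
    y ∈ dualCode C ↔ ∀ x ∈ C, ∑ i, x i * y i = 0 :=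
  Iff.rfl

lemma not_le_dualCode_of_sum_mul_ne_zero {C : Submodule (ZMod 2) (Ω → ZMod 2)}
    {x y : Ω → ZMod 2} (hx : x ∈ C) (hy : y ∈ C) (hxy : ∑ i, x i * y i ≠ 0) :
    ¬ C ≤ dualCode C :=
  fun hC => hxy (mem_dualCode.mp (hC hy) x hx)

variable [DecidableEq Ω]

lemma sum_fixInd_mul_fixInd (σ τ : Equiv.Perm Ω) :
    ∑ i, fixInd σ i * fixInd τ i =
      ((Finset.univ.filter fun i => σ i = i ∧ τ i = i).card : ZMod 2) := by
  rw [Finset.natCast_card_filter]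
  refine Finset.sum_congr rfl fun i _ => ?_
  by_cases hσ : σ i = i <;> by_cases hτ : τ i = i <;> simp [fixInd, hσ, hτ]

lemma sum_fixInd_mul_fixInd_eq_one {σ τ : Equiv.Perm Ω}
    (hodd : Odd (Finset.univ.filter fun i => σ i = i ∧ τ i = i).card) :
    ∑ i, fixInd σ i * fixInd τ i = 1 := by
  rw [sum_fixInd_mul_fixInd, ZMod.natCast_eq_one_iff_odd]
  exact hodd

lemma sum_mul_comp_involution (x : Ω → ZMod 2) {ρ : Equiv.Perm Ω} (hρ : ρ ^ 2 = 1) :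
    ∑ i, x i * x (ρ i) = ∑ i, x i * fixInd ρ i := by
  have hρρ : ∀ i, ρ (ρ i) = i := fun i => by
    simpa [sq, Equiv.Perm.mul_apply] using DFunLike.congr_fun hρ i
  have hsq : ∀ a : ZMod 2, a * a = a := by decide
  set f : Ω → ZMod 2 := fun i => x i * x (ρ i) + x i * fixInd ρ i
  have hfix : ∀ i, ρ i = i → f i = 0 := fun i hi => by
    simp only [f, fixInd, hi, if_true, mul_one, hsq, CharTwo.add_self_eq_zero]
  suffices ∑ i, f i = 0 by
    rwa [Finset.sum_add_distrib, CharTwo.add_eq_zero] at this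
  refine Finset.sum_involution (fun i _ => ρ i) (fun i _ => ?_)
    (fun i _ hi hρi => hi (hfix i hρi)) (fun _ _ => Finset.mem_univ _) (fun i _ => hρρ i)
  by_cases hi : ρ i = i
  · rw [hi, hfix i hi, add_zero]
  · simp only [f, fixInd, hi, Ne.symm hi, hρρ, if_false, mul_zero, add_zero]
    rw [mul_comm]
    exact CharTwo.add_self_eq_zero _

lemma fixInd_mem_of_dualCode_eq {B : Submodule (ZMod 2) (Ω → ZMod 2)} (hB : dualCode B = B)
    {ρ : Equiv.Perm Ω} (hρ : ρ ^ 2 = 1) (hρB : ∀ x ∈ B, (fun i => x (ρ i)) ∈ B) :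
    fixInd ρ ∈ B := by
  rw [← hB]
  refine mem_dualCode.mpr fun x hx => ?_
  have hxρ : (fun i => x (ρ i)) ∈ dualCode B := by rw [hB]; exact hρB x hx
  rw [← sum_mul_comp_involution x hρ]
  exact mem_dualCode.mp hxρ x hx

end

/-- If `G` contains involutions `σ`, `τ` with `|Fix(σ) ∩ Fix(τ)|` odd, then
`C(G,Ω)⊥ = ⟨Fix(ρ) : ρ an involution of G⟩` is not self-orthogonal, and no `G`-invariant
self-dual code of length `|Ω|` exists. -/
theorem odd_fix_intersection_no_selfdual {Ω : Type*} [Fintype Ω] [DecidableEq Ω]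
    (G : Subgroup (Equiv.Perm Ω)) (σ τ : Equiv.Perm Ω) (hσG : σ ∈ G) (hτG : τ ∈ G)
    (hσ2 : σ ^ 2 = 1) (hσ1 : σ ≠ 1) (hτ2 : τ ^ 2 = 1) (hτ1 : τ ≠ 1)
    (hodd : Odd (Finset.univ.filter fun i => σ i = i ∧ τ i = i).card) :
    ¬ (Submodule.span (ZMod 2) {v | ∃ ρ ∈ G, ρ ^ 2 = 1 ∧ ρ ≠ 1 ∧ v = fixInd ρ} ≤
        dualCode (Submodule.span (ZMod 2) {v | ∃ ρ ∈ G, ρ ^ 2 = 1 ∧ ρ ≠ 1 ∧ v = fixInd ρ})) ∧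
    ∀ B : Submodule (ZMod 2) (Ω → ZMod 2),
      (∀ g ∈ G, ∀ x ∈ B, (fun i => x (g⁻¹ i)) ∈ B) → dualCode B ≠ B := by
  have hinner : ∑ i, fixInd σ i * fixInd τ i ≠ 0 := by
    rw [sum_fixInd_mul_fixInd_eq_one hodd]
    exact one_ne_zero
  refine ⟨not_le_dualCode_of_sum_mul_ne_zero (Submodule.subset_span ⟨σ, hσG, hσ2, hσ1, rfl⟩)
    (Submodule.subset_span ⟨τ, hτG, hτ2, hτ1, rfl⟩) hinner, fun B hBG hB => ?_⟩
  have hfix : ∀ ρ ∈ G, ρ ^ 2 = 1 → fixInd ρ ∈ B := fun ρ hρG hρ =>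
    have hρinv : ρ⁻¹ = ρ := inv_eq_of_mul_eq_one_right (sq ρ ▸ hρ)
    fixInd_mem_of_dualCode_eq hB hρ (hρinv ▸ hBG ρ hρG)
  exact not_le_dualCode_of_sum_mul_ne_zero (hfix σ hσG hσ2) (hfix τ hτG hτ2) hinner hB.ge
end

section
/- Let r, s be positive integers with rs > 2. Then 2^{rs} < 4⌊2^{2rs}/24⌋ + 4. Consequently, an extremal doubly even self-dual code of length n = 2^{2rs} (minimum weight 4⌊n/24⌋+4) cannot be invariant under the affine group GF(2^r)^{2s} ⋊ SL(2s, GF(2^r)), since that group contains an involution fixing exactly 2^{rs} points. -/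
/-- The (Hamming) weight of a vector over `GF(2)`. -/
def wt {Ω : Type*} [Fintype Ω] (x : Ω → ZMod 2) : ℕ :=
  (Finset.univ.filter fun i => x i ≠ 0).card

/-!
If `σ` is an involution of the coordinates preserving a self-dual binary code `C`, then for
`x ∈ C` the word `x ∘ σ` is again in `C`, so `∑ v, x v * x (σ v) = 0`. In characteristic 2 the
terms at `v` and `σ v ≠ v` cancel, and what is left is `∑` of `x v` over the fixed points of `σ`.
Hence the indicator of the fixed-point set lies in `dualCode C = C`, and its weight, the number of
fixed points, is at least the minimum weight. Over a field of characteristic 2 the block matrix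
`[[1, 1], [0, 1]]` with `s × s` blocks is an involution in `SL(2s, F)` whose fixed vectors are those
with vanishing second half: `|F|^s = 2^(rs)` of them, fewer than `4⌊2^(2rs)/24⌋ + 4` once `rs > 2`.
-/

open Finset Matrix

section FixedPointIndicator

variable {Ω : Type*} [Fintype Ω] [DecidableEq Ω]

def fixedIndicator (σ : Ω → Ω) : Ω → ZMod 2 := fun v => if σ v = v then 1 else 0

theorem wt_fixedIndicator (σ : Ω → Ω) :
    wt (fixedIndicator σ) = Nat.card {v // σ v = v} := by
  simp [wt, fixedIndicator, Nat.card_eq_fintype_card, Fintype.card_subtype]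

theorem fixedIndicator_mem_dualCode {C : Submodule (ZMod 2) (Ω → ZMod 2)} (hC : C ≤ dualCode C)
    {σ : Ω → Ω} (hσ : Function.Involutive σ) (hCσ : ∀ x ∈ C, x ∘ σ ∈ C) :
    fixedIndicator σ ∈ dualCode C := by
  intro x hx
  have horth : ∑ v, x v * x (σ v) = 0 := hC (hCσ x hx) x hx
  have hsq : ∀ a : ZMod 2, a * a + a = 0 := by decide
  -- The terms at `v` and `σ v` cancel; at a fixed point `x v * x v + x v = 0`.
  have hcancel : ∑ v, (x v * x (σ v) + x v * fixedIndicator σ v) = 0 := by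
    refine sum_involution (fun v _ => σ v) (fun v _ => ?_) (fun v _ hv hfix => hv ?_)
      (fun _ _ => mem_univ _) (fun v _ => hσ v)
    · by_cases hfix : σ v = v
      · simp only [hfix]
        exact CharTwo.add_self_eq_zero _
      · have h₁ : fixedIndicator σ v = 0 := if_neg hfix
        have h₂ : fixedIndicator σ (σ v) = 0 := if_neg fun h => hfix (hσ.injective h)
        rw [h₁, h₂, hσ v, mul_zero, mul_zero, add_zero, add_zero, mul_comm (x (σ v))]
        exact CharTwo.add_self_eq_zero _
    · have h₁ : fixedIndicator σ v = 1 := if_pos hfix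
      rw [h₁, hfix, mul_one]
      exact hsq _
  rwa [sum_add_distrib, horth, zero_add] at hcancel

theorem le_card_fixedPoints_of_involutive {C : Submodule (ZMod 2) (Ω → ZMod 2)}
    (hC : dualCode C = C) {d : ℕ} (hd : ∀ x ∈ C, x ≠ 0 → d ≤ wt x) {σ : Ω → Ω}
    (hσ : Function.Involutive σ) (hCσ : ∀ x ∈ C, x ∘ σ ∈ C) {a : Ω} (ha : σ a = a) :
    d ≤ Nat.card {v // σ v = v} := by
  have hmem : fixedIndicator σ ∈ C := hC ▸ fixedIndicator_mem_dualCode hC.ge hσ hCσ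
  have hne : fixedIndicator σ ≠ 0 := fun h => by simpa [fixedIndicator, ha] using congrFun h a
  exact wt_fixedIndicator σ ▸ hd _ hmem hne

end FixedPointIndicator

section BlockShear

variable (ι R : Type*) [Fintype ι] [DecidableEq ι] [CommRing R]

def blockShear : Matrix (ι ⊕ ι) (ι ⊕ ι) R := fromBlocks 1 1 0 1

theorem det_blockShear : (blockShear ι R).det = 1 := by
  simp [blockShear]

theorem blockShear_mul_self [CharP R 2] : blockShear ι R * blockShear ι R = 1 := by
  have h : (1 + 1 : Matrix ι ι R) = 0 := by
    rw [← two_smul R, CharTwo.two_eq_zero, zero_smul]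
  simp [blockShear, fromBlocks_multiply, h]

variable {ι R}

theorem blockShear_mulVec_eq_self_iff (w : ι ⊕ ι → R) :
    blockShear ι R *ᵥ w = w ↔ w ∘ Sum.inr = 0 := by
  rw [blockShear, fromBlocks_mulVec, one_mulVec, one_mulVec, zero_mulVec, zero_add]
  constructor
  · intro h
    simpa using congrArg (· ∘ Sum.inl) h
  · intro h
    conv_rhs => rw [← Sum.elim_comp_inl_inr w]
    rw [h, add_zero]

theorem card_fixedPoints_blockShear :
    Nat.card {w // blockShear ι R *ᵥ w = w} = Nat.card R ^ Nat.card ι := by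
  rw [← Nat.card_fun]
  refine Nat.card_congr ((Equiv.subtypeEquivRight blockShear_mulVec_eq_self_iff).trans
    { toFun w := w.1 ∘ Sum.inl
      invFun u := ⟨Sum.elim u 0, rfl⟩
      left_inv w := Subtype.ext <| by ext (i | i); exacts [rfl, (congrFun w.2 i).symm]
      right_inv u := rfl })

end BlockShear

theorem card_fixedPoints_reindex {m n R : Type*} [Fintype m] [Fintype n] [CommRing R]
    (e : m ≃ n) (A : Matrix m m R) :
    Nat.card {v // reindex e e A *ᵥ v = v} = Nat.card {w // A *ᵥ w = w} :=
  Nat.card_congr <| (e.arrowCongr (Equiv.refl R)).symm.subtypeEquiv fun v => by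
    rw [reindex_apply, submatrix_mulVec_equiv, Equiv.comp_symm_eq, Equiv.symm_symm]
    rfl

def finSumFinEquivTwoMul (s : ℕ) : Fin s ⊕ Fin s ≃ Fin (2 * s) :=
  finSumFinEquiv.trans (finCongr (two_mul s).symm)

def blockShearSL (s : ℕ) (R : Type*) [CommRing R] : SpecialLinearGroup (Fin (2 * s)) R :=
  ⟨reindex (finSumFinEquivTwoMul s) (finSumFinEquivTwoMul s) (blockShear (Fin s) R),
    by rw [det_reindex_self, det_blockShear]⟩

theorem blockShearSL_mulVec_involutive (s : ℕ) (R : Type*) [CommRing R] [CharP R 2] :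
    Function.Involutive ((blockShearSL s R : Matrix (Fin (2 * s)) (Fin (2 * s)) R) *ᵥ ·) :=
  fun v => by
    simp only [blockShearSL, mulVec_mulVec]
    rw [reindex_apply, submatrix_mul_equiv, blockShear_mul_self, submatrix_one_equiv, one_mulVec]

theorem card_fixedPoints_blockShearSL (s : ℕ) (R : Type*) [CommRing R] :
    Nat.card {v // (blockShearSL s R : Matrix (Fin (2 * s)) (Fin (2 * s)) R) *ᵥ v = v} =
      Nat.card R ^ s := by
  simp only [blockShearSL]
  rw [card_fixedPoints_reindex, card_fixedPoints_blockShear, Nat.card_fin]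

def mallowsSloaneBound (n : ℕ) : ℕ := 4 * (n / 24) + 4

theorem two_pow_lt_mallowsSloaneBound {m : ℕ} (hm : 2 < m) :
    2 ^ m < mallowsSloaneBound (2 ^ (2 * m)) := by
  have h8 : 8 ≤ 2 ^ m := Nat.pow_le_pow_right two_pos hm
  have hsq : 2 ^ (2 * m) = 2 ^ m * 2 ^ m := by rw [two_mul, pow_add]
  have h8k : 8 * 2 ^ m ≤ 2 ^ m * 2 ^ m := Nat.mul_le_mul_right _ h8
  rw [mallowsSloaneBound, hsq]
  omega

theorem extremal_not_affine_invariant_general (r s : ℕ) (h : 2 < r * s) :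
    2 ^ (r * s) < 4 * (2 ^ (2 * (r * s)) / 24) + 4 ∧
    ∀ (F : Type) (_ : Field F) (_ : Fintype F), Fintype.card F = 2 ^ r →
      ∀ C : Submodule (ZMod 2) ((Fin (2 * s) → F) → ZMod 2),
        dualCode C = C →
        (∀ x ∈ C, 4 ∣ wt x) →
        (∀ x ∈ C, x ≠ 0 → 4 * (2 ^ (2 * (r * s)) / 24) + 4 ≤ wt x) →
        (∃ x ∈ C, x ≠ 0 ∧ wt x = 4 * (2 ^ (2 * (r * s)) / 24) + 4) →
        (∀ t : Fin (2 * s) → F, ∀ x ∈ C, (fun v => x (v + t)) ∈ C) →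
        (∀ A : Matrix.SpecialLinearGroup (Fin (2 * s)) F, ∀ x ∈ C,
          (fun v => x ((A : Matrix (Fin (2*s)) (Fin (2*s)) F).mulVec v)) ∈ C) →
        False := by
  refine ⟨two_pow_lt_mallowsSloaneBound h, fun F _ _ hF C hdual _ hmin _ _ hSL => ?_⟩
  have : CharP F 2 := charP_of_card_eq_prime_pow hF
  classical
  have hle := le_card_fixedPoints_of_involutive hdual hmin
    (blockShearSL_mulVec_involutive s F) (hSL _) (mulVec_zero _)
  rw [card_fixedPoints_blockShearSL, Nat.card_eq_fintype_card, hF, ← pow_mul] at hle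
  exact absurd hle (not_le.2 (two_pow_lt_mallowsSloaneBound h))

/-- For `rs > 2` one has `2^(rs) < 4⌊2^(2rs)/24⌋ + 4`; consequently no extremal doubly even
self-dual code of length `2^(2rs)` is invariant under the affine group
`GF(2^r)^(2s) ⋊ SL(2s, GF(2^r))`. -/
theorem extremal_not_affine_invariant (r s : ℕ) (hr : 0 < r) (hs : 0 < s) (h : 2 < r * s) :
    2 ^ (r * s) < 4 * (2 ^ (2 * (r * s)) / 24) + 4 ∧
    ∀ (F : Type) (_ : Field F) (_ : Fintype F), Fintype.card F = 2 ^ r →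
      ∀ C : Submodule (ZMod 2) ((Fin (2 * s) → F) → ZMod 2),
        dualCode C = C →
        (∀ x ∈ C, 4 ∣ wt x) →
        (∀ x ∈ C, x ≠ 0 → 4 * (2 ^ (2 * (r * s)) / 24) + 4 ≤ wt x) →
        (∃ x ∈ C, x ≠ 0 ∧ wt x = 4 * (2 ^ (2 * (r * s)) / 24) + 4) →
        (∀ t : Fin (2 * s) → F, ∀ x ∈ C, (fun v => x (v + t)) ∈ C) →
        (∀ A : Matrix.SpecialLinearGroup (Fin (2 * s)) F, ∀ x ∈ C,
          (fun v => x ((A : Matrix (Fin (2*s)) (Fin (2*s)) F).mulVec v)) ∈ C) →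
        False :=
  extremal_not_affine_invariant_general r s h
end
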